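/- Let G be a finite group acting on a commutative ring A and let I be a G-stable ideal. Suppose that for every n ≥ 1 and i = 1, 2, the group cohomology H^i(G, I^n/I^{n+1}) vanishes. Then for every n ≥ 1, the natural map of invariant unit groups ((A/I^{n+1})*)^G → ((A/I^n)*)^G is surjective, and the map H¹(G, (A/I^{n+1})*) → H¹(G, (A/I^n)*) is an isomorphism. -/

import Mathlib

/-!
For `n ≥ 1` we have `Iⁿ · Iⁿ ⊆ Iⁿ⁺¹`, so `x ↦ 1 + x` is a `G`-equivariant isomorphism from
`Iⁿ/Iⁿ⁺¹` onto the kernel of `(A/Iⁿ⁺¹)ˣ → (A/Iⁿ)ˣ`, and this map of unit groups is onto because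
the kernel of the ring map `A/Iⁿ⁺¹ → A/Iⁿ` is nilpotent. The claims are then the relevant part of the long exact
cohomology sequence of `1 → Iⁿ/Iⁿ⁺¹ → (A/Iⁿ⁺¹)ˣ → (A/Iⁿ)ˣ → 1`, proved with explicit cocycles:
a lift of an invariant unit, or of a cocycle whose image is a coboundary, is wrong by a 1-cocycle
of the kernel, which `H¹ = 0` lets us remove; an arbitrary lift of a cocycle is wrong by a
2-cocycle of the kernel, which `H² = 0` lets us remove.
-/

open groupCohomology Function Multiplicative

section Cocycles

variable {G B : Type} [Group G] [CommGroup B] [MulDistribMulAction G B]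

theorem isMulCocycle₁_smul_div (b : B) : IsMulCocycle₁ fun g : G => g • b / b := by
  intro g h
  simp only [mul_smul, smul_div']
  apply Additive.ofMul.injective
  simp only [ofMul_mul, ofMul_div]
  abel

theorem isMulCocycle₁_div {f f' : G → B} (hf : IsMulCocycle₁ f) (hf' : IsMulCocycle₁ f') :
    IsMulCocycle₁ fun g => f g / f' g := by
  intro g h
  simp only [hf g h, hf' g h, smul_div']
  apply Additive.ofMul.injective
  simp only [ofMul_mul, ofMul_div]
  abel

theorem isMulCocycle₂_smul_div_mul (f : G → B) :
    IsMulCocycle₂ fun p : G × G => p.1 • f p.2 / f (p.1 * p.2) * f p.1 := by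
  intro g h k
  simp only [smul_mul', smul_div', mul_smul, mul_assoc]
  apply Additive.ofMul.injective
  simp only [ofMul_mul, ofMul_div]
  abel

theorem isMulCocycle₁_div_of_smul_div_mul_eq {f f' : G → B}
    (h : ∀ g k : G, g • f' k / f' (g * k) * f' g = g • f k / f (g * k) * f g) :
    IsMulCocycle₁ fun g => f g / f' g := by
  intro g k
  have hgk := h g k
  rw [← div_eq_one] at hgk ⊢
  rw [← hgk, smul_div']
  apply Additive.ofMul.injective
  simp only [ofMul_mul, ofMul_div]
  abel

end Cocycles

section Vanishing

variable {G M : Type} [Group G] [AddCommGroup M] [DistribMulAction G M]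

theorem isCoboundary₁_of_subsingleton_H1
    [Subsingleton (groupCohomology (Rep.ofDistribMulAction ℤ G M) 1)]
    {f : G → M} (hf : IsCocycle₁ f) : IsCoboundary₁ f :=
  isCoboundary₁_of_mem_coboundaries₁ _ <|
    (H1π_eq_zero_iff (cocyclesOfIsCocycle₁ (k := ℤ) hf)).1 (Subsingleton.elim _ _)

theorem isCoboundary₂_of_subsingleton_H2
    [Subsingleton (groupCohomology (Rep.ofDistribMulAction ℤ G M) 2)]
    {f : G × G → M} (hf : IsCocycle₂ f) : IsCoboundary₂ f :=
  isCoboundary₂_of_mem_coboundaries₂ _ <|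
    (H2π_eq_zero_iff (cocyclesOfIsCocycle₂ (k := ℤ) hf)).1 (Subsingleton.elim _ _)

end Vanishing

structure IsEquivariantShortExact (G : Type*) {M B C : Type*} [Monoid G] [AddCommGroup M]
    [DistribMulAction G M] [CommGroup B] [MulDistribMulAction G B] [CommGroup C]
    [MulDistribMulAction G C] (E : Multiplicative M →* B) (Φ : B →* C) : Prop where
  map_smul_left : ∀ (g : G) (m : M), E (ofAdd (g • m)) = g • E (ofAdd m)
  map_smul_right : ∀ (g : G) (b : B), Φ (g • b) = g • Φ b
  injective : Injective E
  ker_eq_range : Φ.ker = E.range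
  surjective : Surjective Φ

namespace IsEquivariantShortExact

variable {G M B C : Type} [Group G] [AddCommGroup M] [DistribMulAction G M]
  [CommGroup B] [MulDistribMulAction G B] [CommGroup C] [MulDistribMulAction G C]
  {E : Multiplicative M →* B} {Φ : B →* C}

theorem map_apply_eq_one (h : IsEquivariantShortExact G E Φ) (m : M) : Φ (E (ofAdd m)) = 1 :=
  h.ker_eq_range.ge ⟨ofAdd m, rfl⟩

theorem exists_eq_of_map_eq_one (h : IsEquivariantShortExact G E Φ) {b : B} (hb : Φ b = 1) :
    ∃ m : M, E (ofAdd m) = b :=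
  h.ker_eq_range.le hb

theorem exists_smul_div_eq_of_isMulCocycle₁ (h : IsEquivariantShortExact G E Φ)
    [Subsingleton (groupCohomology (Rep.ofDistribMulAction ℤ G M) 1)]
    {f : G → B} (hf : IsMulCocycle₁ f) (hΦf : ∀ g, Φ (f g) = 1) :
    ∃ m : M, ∀ g : G, g • E (ofAdd m) / E (ofAdd m) = f g := by
  choose f' hf' using fun g => h.exists_eq_of_map_eq_one (hΦf g)
  have hcocycle : IsCocycle₁ f' := fun g k => h.injective <|
    show E (ofAdd (f' (g * k))) = E (ofAdd (g • f' k + f' g)) by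
    rw [ofAdd_add, map_mul, h.map_smul_left, hf', hf', hf', hf]
  obtain ⟨m, hm⟩ := isCoboundary₁_of_subsingleton_H1 hcocycle
  exact ⟨m, fun g => by rw [← h.map_smul_left, ← map_div, ← ofAdd_sub, hm, hf']⟩

theorem exists_smul_div_mul_eq_of_isMulCocycle₂ (h : IsEquivariantShortExact G E Φ)
    [Subsingleton (groupCohomology (Rep.ofDistribMulAction ℤ G M) 2)]
    {F : G × G → B} (hF : IsMulCocycle₂ F) (hΦF : ∀ p, Φ (F p) = 1) :
    ∃ x : G → M, ∀ g k : G,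
      g • E (ofAdd (x k)) / E (ofAdd (x (g * k))) * E (ofAdd (x g)) = F (g, k) := by
  choose F' hF' using fun p => h.exists_eq_of_map_eq_one (hΦF p)
  have hcocycle : IsCocycle₂ F' := fun g k l => h.injective <|
    show E (ofAdd (F' (g * k, l) + F' (g, k))) = E (ofAdd (g • F' (k, l) + F' (g, k * l))) by
    rw [ofAdd_add, ofAdd_add, map_mul, map_mul, h.map_smul_left, hF', hF', hF', hF', hF]
  obtain ⟨x, hx⟩ := isCoboundary₂_of_subsingleton_H2 hcocycle
  exact ⟨x, fun g k => by
    rw [← h.map_smul_left, ← map_div, ← map_mul, ← ofAdd_sub, ← ofAdd_add, hx, hF']⟩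

theorem exists_map_eq_of_smul_eq (h : IsEquivariantShortExact G E Φ)
    [Subsingleton (groupCohomology (Rep.ofDistribMulAction ℤ G M) 1)]
    {u : C} (hu : ∀ g : G, g • u = u) : ∃ v : B, (∀ g : G, g • v = v) ∧ Φ v = u := by
  obtain ⟨v, rfl⟩ := h.surjective u
  obtain ⟨m, hm⟩ := h.exists_smul_div_eq_of_isMulCocycle₁ (isMulCocycle₁_smul_div v)
    fun g => by rw [map_div, h.map_smul_right, hu, div_self']
  refine ⟨v / E (ofAdd m), fun g => ?_, by rw [map_div, h.map_apply_eq_one, div_one]⟩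
  rw [smul_div', div_eq_div_iff_div_eq_div, hm]

theorem isMulCoboundary₁_of_isMulCoboundary₁_comp (h : IsEquivariantShortExact G E Φ)
    [Subsingleton (groupCohomology (Rep.ofDistribMulAction ℤ G M) 1)]
    {c : G → B} (hc : IsMulCocycle₁ c) (hΦc : IsMulCoboundary₁ (Φ ∘ c)) :
    IsMulCoboundary₁ c := by
  obtain ⟨b, hb⟩ := hΦc
  obtain ⟨b, rfl⟩ := h.surjective b
  obtain ⟨m, hm⟩ :=
    h.exists_smul_div_eq_of_isMulCocycle₁ (isMulCocycle₁_div hc (isMulCocycle₁_smul_div b))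
      fun g => by rw [map_div, map_div, h.map_smul_right, hb, comp_apply, div_self']
  refine ⟨b * E (ofAdd m), fun g => ?_⟩
  rw [smul_mul', div_eq_iff_eq_mul.1 (hm g).symm]
  apply Additive.ofMul.injective
  simp only [ofMul_mul, ofMul_div]
  abel

theorem exists_isMulCocycle₁_comp_eq (h : IsEquivariantShortExact G E Φ)
    [Subsingleton (groupCohomology (Rep.ofDistribMulAction ℤ G M) 2)]
    {c : G → C} (hc : IsMulCocycle₁ c) : ∃ c' : G → B, IsMulCocycle₁ c' ∧ Φ ∘ c' = c := by
  choose c₀ hc₀ using fun g => h.surjective (c g)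
  obtain ⟨x, hx⟩ := h.exists_smul_div_mul_eq_of_isMulCocycle₂ (isMulCocycle₂_smul_div_mul c₀)
    fun p => by
      rw [map_mul, map_div, h.map_smul_right, hc₀, hc₀, hc₀, hc, div_mul_eq_mul_div, div_self']
  refine ⟨fun g => c₀ g / E (ofAdd (x g)), isMulCocycle₁_div_of_smul_div_mul_eq hx,
    funext fun g => ?_⟩
  simp only [comp_apply, map_div, h.map_apply_eq_one, div_one, hc₀]

end IsEquivariantShortExact

theorem RingHom.isLocalHom_of_isNilpotent_ker {R S : Type*} [CommRing R] [Ring S] (f : R →+* S)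
    (hf : Surjective f) (hker : ∀ x ∈ RingHom.ker f, IsNilpotent x) : IsLocalHom f where
  map_nonunit a ha := by
    obtain ⟨b, hb⟩ := hf ↑ha.unit⁻¹
    have hab : a * b - 1 ∈ RingHom.ker f := by
      rw [RingHom.mem_ker, map_sub, map_mul, hb, IsUnit.mul_val_inv, map_one, sub_self]
    exact isUnit_of_mul_isUnit_left (sub_add_cancel (a * b) 1 ▸ (hker _ hab).isUnit_add_one)

section OneAddUnits

variable {R M : Type*} [CommRing R] [AddCommGroup M]

def oneAddUnitsHom (j : M →+ R) (hj : ∀ m m', j m * j m' = 0) : Multiplicative M →* Rˣ where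
  toFun m := ⟨1 + j m.toAdd, 1 - j m.toAdd, by linear_combination -hj m.toAdd m.toAdd,
    by linear_combination -hj m.toAdd m.toAdd⟩
  map_one' := Units.ext <| by simp
  map_mul' m m' := Units.ext <| by
    simp only [toAdd_mul, map_add, Units.val_mul]
    linear_combination -hj m.toAdd m'.toAdd

@[simp]
theorem val_oneAddUnitsHom (j : M →+ R) (hj : ∀ m m', j m * j m' = 0) (m : Multiplicative M) :
    (oneAddUnitsHom j hj m : R) = 1 + j m.toAdd :=
  rfl

end OneAddUnits

attribute [local instance] Units.mulDistribMulActionRight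

namespace Ideal

class IsStable (G : Type*) {A : Type*} [Monoid G] [CommRing A] [MulSemiringAction G A]
    (J : Ideal A) : Prop where
  smul_mem : ∀ (g : G) (x : A), x ∈ J → g • x ∈ J

variable {G A : Type*} [Monoid G] [CommRing A] [MulSemiringAction G A]

instance IsStable.pow (I : Ideal A) [I.IsStable G] (n : ℕ) : (I ^ n).IsStable G where
  smul_mem g := by
    have : (I ^ n).map (MulSemiringAction.toRingHom G A g) ≤ I ^ n := by
      rw [Ideal.map_pow]
      exact Ideal.pow_right_mono (Ideal.map_le_iff_le_comap.2 (IsStable.smul_mem g)) n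
    exact fun x hx => this (Ideal.mem_map_of_mem _ hx)

namespace Quotient

theorem mul_eq_zero_of_mem_map {J K : Ideal A} (hKK : K * K ≤ J)
    {x y : A ⧸ J} (hx : x ∈ K.map (mk J)) (hy : y ∈ K.map (mk J)) : x * y = 0 := by
  have hxy : x * y ∈ (K * K).map (mk J) := Ideal.map_mul (mk J) K K ▸ Ideal.mul_mem_mul hx hy
  rwa [Ideal.map_mk_eq_bot_of_le hKK, Ideal.mem_bot] at hxy

variable (J : Ideal A) [J.IsStable G]

instance mulSemiringAction : MulSemiringAction G (A ⧸ J) where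
  smul g := quotientMap J (MulSemiringAction.toRingHom G A g) (IsStable.smul_mem g)
  one_smul x := by
    obtain ⟨a, rfl⟩ := mk_surjective x
    exact congrArg (mk J) (one_smul G a)
  mul_smul g g' x := by
    obtain ⟨a, rfl⟩ := mk_surjective x
    exact congrArg (mk J) (mul_smul g g' a)
  smul_zero g := map_zero _
  smul_add g := map_add _
  smul_one g := map_one _
  smul_mul g := map_mul _

theorem smul_mk (g : G) (a : A) : g • mk J a = mk J (g • a) :=
  rfl

theorem factor_smul {K : Ideal A} [K.IsStable G] (hJK : J ≤ K) (g : G) (x : A ⧸ J) :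
    factor hJK (g • x) = g • factor hJK x := by
  obtain ⟨a, rfl⟩ := mk_surjective x
  rfl

theorem forall_mk_eq_imp_iff (P : A ⧸ J → Prop) (g : G) (x : A ⧸ J) :
    (∀ a, mk J a = x → P (mk J (g • a))) ↔ P (g • x) := by
  refine ⟨fun h => ?_, fun h a ha => ?_⟩
  · obtain ⟨a, rfl⟩ := mk_surjective x
    exact h a rfl
  · rwa [← smul_mk, ha]

theorem units_smul_eq_self_iff (u : (A ⧸ J)ˣ) (g : G) :
    g • u = u ↔ ∀ a, mk J a = u → mk J (g • a) = u :=
  Units.ext_iff.trans (forall_mk_eq_imp_iff J (· = ↑u) g u).symm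

theorem isMulCocycle₁_units_iff (c : G → (A ⧸ J)ˣ) :
    IsMulCocycle₁ c ↔ ∀ g h x, mk J x = c h → (c (g * h) : A ⧸ J) = mk J (g • x) * c g :=
  forall₂_congr fun g h => Units.ext_iff.trans
    (forall_mk_eq_imp_iff J (fun y => (c (g * h) : A ⧸ J) = y * c g) g (c h)).symm

theorem isMulCoboundary₁_units_iff (c : G → (A ⧸ J)ˣ) :
    IsMulCoboundary₁ c ↔
      ∃ b : (A ⧸ J)ˣ, ∀ g a, mk J a = b → (c g : A ⧸ J) = mk J (g • a) * ↑b⁻¹ :=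
  exists_congr fun b => forall_congr' fun g => by
    rw [forall_mk_eq_imp_iff J (fun y => (c g : A ⧸ J) = y * ↑b⁻¹), eq_comm, Units.ext_iff,
      div_eq_mul_inv, Units.val_mul]
    rfl

variable {M : Type*} [AddCommGroup M] [DistribMulAction G M]

theorem exists_isEquivariantShortExact_units {K : Ideal A} [K.IsStable G]
    (hJK : J ≤ K) (hKK : K * K ≤ J) (j : M →+ A ⧸ J) (hj_inj : Injective j)
    (hj_range : ∀ x, (∃ m, j m = x) ↔ x ∈ K.map (mk J))
    (hj_smul : ∀ (g : G) (m : M) (a : A), j m = mk J a → j (g • m) = mk J (g • a)) :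
    ∃ E : Multiplicative M →* (A ⧸ J)ˣ,
      IsEquivariantShortExact G E (Units.map (factor hJK).toMonoidHom) := by
  have hj_mem (m : M) : j m ∈ K.map (mk J) := (hj_range _).1 ⟨m, rfl⟩
  have hj_ker (m : M) : factor hJK (j m) = 0 := by
    rw [← RingHom.mem_ker, factor_ker]
    exact hj_mem m
  have hj_equivariant (g : G) (m : M) : j (g • m) = g • j m := by
    obtain ⟨a, ha⟩ := mk_surjective (j m)
    rw [← ha, smul_mk]
    exact hj_smul g m a ha.symm
  have hnil : ∀ x ∈ RingHom.ker (factor hJK), IsNilpotent x := by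
    rw [factor_ker]
    exact fun x hx => ⟨2, by rw [pow_two, mul_eq_zero_of_mem_map hKK hx hx]⟩
  refine ⟨oneAddUnitsHom j fun m m' => mul_eq_zero_of_mem_map hKK (hj_mem m) (hj_mem m'),
    ⟨fun g m => ?_, fun g u => ?_, fun m m' hmm' => ?_, ?_, ?_⟩⟩
  · ext
    simp [hj_equivariant]
  · ext
    exact factor_smul J hJK g u
  · have := congrArg Units.val hmm'
    simp only [val_oneAddUnitsHom, add_right_inj] at this
    exact hj_inj this
  · ext u
    simp only [MonoidHom.mem_ker, MonoidHom.mem_range, Units.ext_iff, Units.coe_map,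
      RingHom.toMonoidHom_eq_coe, MonoidHom.coe_coe, val_oneAddUnitsHom, Units.val_one]
    constructor
    · intro hu
      have : (u : A ⧸ J) - 1 ∈ K.map (mk J) := by
        rw [← factor_ker hJK, RingHom.mem_ker, map_sub, hu, map_one, sub_self]
      obtain ⟨m, hm⟩ := (hj_range _).2 this
      exact ⟨ofAdd m, by simp [hm]⟩
    · rintro ⟨m, hm⟩
      rw [← hm, map_add, map_one, hj_ker, add_zero]
  · exact IsLocalRing.surjective_units_map_of_local_ringHom _ (factor_surjective hJK)
      (RingHom.isLocalHom_of_isNilpotent_ker _ (factor_surjective hJK) hnil)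

end Quotient

end Ideal

theorem stmt11_general (G A : Type) [Group G] [CommRing A]
    [MulSemiringAction G A] (I : Ideal A)
    (hstable : ∀ (g : G) (x : A), x ∈ I → g • x ∈ I)
    (M : ℕ → Type) [∀ n, AddCommGroup (M n)] [∀ n, DistribMulAction G (M n)]
    (j : ∀ n, M n →+ A ⧸ I ^ (n + 1))
    (hj_inj : ∀ n, Function.Injective (j n))
    (hj_range : ∀ (n : ℕ) (x : A ⧸ I ^ (n + 1)),
      (∃ m, j n m = x) ↔ x ∈ (I ^ n).map (Ideal.Quotient.mk (I ^ (n + 1))))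
    (hj_equiv : ∀ (n : ℕ) (g : G) (m : M n) (a : A),
      j n m = Ideal.Quotient.mk (I ^ (n + 1)) a →
        j n (g • m) = Ideal.Quotient.mk (I ^ (n + 1)) (g • a))
    (h1 : ∀ n : ℕ, 1 ≤ n →
      Subsingleton (groupCohomology (Rep.ofDistribMulAction ℤ G (M n)) 1))
    (h2 : ∀ n : ℕ, 1 ≤ n →
      Subsingleton (groupCohomology (Rep.ofDistribMulAction ℤ G (M n)) 2)) :
    ∀ n : ℕ, 1 ≤ n →
      -- surjectivity of `((A/Iⁿ⁺¹)ˣ)ᴳ → ((A/Iⁿ)ˣ)ᴳ`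
      ((∀ u : (A ⧸ I ^ n)ˣ,
        (∀ (g : G) (a : A), Ideal.Quotient.mk (I ^ n) a = (u : A ⧸ I ^ n) →
          Ideal.Quotient.mk (I ^ n) (g • a) = (u : A ⧸ I ^ n)) →
        ∃ v : (A ⧸ I ^ (n + 1))ˣ,
          (∀ (g : G) (a : A),
            Ideal.Quotient.mk (I ^ (n + 1)) a = (v : A ⧸ I ^ (n + 1)) →
            Ideal.Quotient.mk (I ^ (n + 1)) (g • a) = (v : A ⧸ I ^ (n + 1))) ∧
          Ideal.Quotient.factor (Ideal.pow_le_pow_right n.le_succ)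
            (v : A ⧸ I ^ (n + 1)) = (u : A ⧸ I ^ n)) ∧
      -- injectivity of `H¹(G, (A/Iⁿ⁺¹)ˣ) → H¹(G, (A/Iⁿ)ˣ)`
      (∀ c : G → (A ⧸ I ^ (n + 1))ˣ,
        (∀ (g h : G) (x : A),
          Ideal.Quotient.mk (I ^ (n + 1)) x = (c h : A ⧸ I ^ (n + 1)) →
          (c (g * h) : A ⧸ I ^ (n + 1)) =
            Ideal.Quotient.mk (I ^ (n + 1)) (g • x) * (c g : A ⧸ I ^ (n + 1))) →
        (∃ b : (A ⧸ I ^ n)ˣ, ∀ (g : G) (a : A),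
          Ideal.Quotient.mk (I ^ n) a = (b : A ⧸ I ^ n) →
          Ideal.Quotient.factor (Ideal.pow_le_pow_right n.le_succ)
              (c g : A ⧸ I ^ (n + 1)) =
            Ideal.Quotient.mk (I ^ n) (g • a) * ((b⁻¹ : (A ⧸ I ^ n)ˣ) : A ⧸ I ^ n)) →
        ∃ a : (A ⧸ I ^ (n + 1))ˣ, ∀ (g : G) (x : A),
          Ideal.Quotient.mk (I ^ (n + 1)) x = (a : A ⧸ I ^ (n + 1)) →
          (c g : A ⧸ I ^ (n + 1)) =
            Ideal.Quotient.mk (I ^ (n + 1)) (g • x) *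
              ((a⁻¹ : (A ⧸ I ^ (n + 1))ˣ) : A ⧸ I ^ (n + 1))) ∧
      -- surjectivity of `H¹(G, (A/Iⁿ⁺¹)ˣ) → H¹(G, (A/Iⁿ)ˣ)`
      (∀ c : G → (A ⧸ I ^ n)ˣ,
        (∀ (g h : G) (x : A),
          Ideal.Quotient.mk (I ^ n) x = (c h : A ⧸ I ^ n) →
          (c (g * h) : A ⧸ I ^ n) =
            Ideal.Quotient.mk (I ^ n) (g • x) * (c g : A ⧸ I ^ n)) →
        ∃ c' : G → (A ⧸ I ^ (n + 1))ˣ,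
          (∀ (g h : G) (x : A),
            Ideal.Quotient.mk (I ^ (n + 1)) x = (c' h : A ⧸ I ^ (n + 1)) →
            (c' (g * h) : A ⧸ I ^ (n + 1)) =
              Ideal.Quotient.mk (I ^ (n + 1)) (g • x) *
                (c' g : A ⧸ I ^ (n + 1))) ∧
          ∃ b : (A ⧸ I ^ n)ˣ, ∀ (g : G) (a : A),
            Ideal.Quotient.mk (I ^ n) a = (b : A ⧸ I ^ n) →
            Ideal.Quotient.factor (Ideal.pow_le_pow_right n.le_succ)
                (c' g : A ⧸ I ^ (n + 1)) =
              (c g : A ⧸ I ^ n) *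
                (Ideal.Quotient.mk (I ^ n) (g • a) *
                  ((b⁻¹ : (A ⧸ I ^ n)ˣ) : A ⧸ I ^ n)))) := by
  intro n hn
  have : I.IsStable G := ⟨hstable⟩
  have := h1 n hn
  have := h2 n hn
  have hsq : I ^ n * I ^ n ≤ I ^ (n + 1) := by
    rw [← pow_add]
    exact Ideal.pow_le_pow_right (by omega)
  obtain ⟨E, hE⟩ := Ideal.Quotient.exists_isEquivariantShortExact_units (I ^ (n + 1))
    (Ideal.pow_le_pow_right n.le_succ) hsq (j n) (hj_inj n) (hj_range n) (hj_equiv n)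
  have hcocycle {k : ℕ} := Ideal.Quotient.isMulCocycle₁_units_iff (G := G) (I ^ k)
  have hcoboundary {k : ℕ} := Ideal.Quotient.isMulCoboundary₁_units_iff (G := G) (I ^ k)
  have hfixed {k : ℕ} := Ideal.Quotient.units_smul_eq_self_iff (G := G) (I ^ k)
  refine ⟨fun u hu => ?_, fun c hc hcob => ?_, fun c hc => ?_⟩
  · obtain ⟨v, hv, rfl⟩ := hE.exists_map_eq_of_smul_eq fun g => (hfixed u g).2 (hu g)
    exact ⟨v, fun g => (hfixed v g).1 (hv g), rfl⟩
  · exact (hcoboundary c).1 <| hE.isMulCoboundary₁_of_isMulCoboundary₁_comp ((hcocycle c).2 hc)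
      ((hcoboundary _).2 hcob)
  · obtain ⟨c', hc', rfl⟩ := hE.exists_isMulCocycle₁_comp_eq ((hcocycle c).2 hc)
    refine ⟨c', (hcocycle c').1 hc', 1, fun g a ha => ?_⟩
    rw [← Ideal.Quotient.smul_mk, ha, inv_one, Units.val_one, smul_one, mul_one, mul_one]
    rfl

/-- Let `G` be a finite group acting on a commutative ring
`A` and let `I` be a `G`-stable ideal.  Suppose `H^i(G, Iⁿ/Iⁿ⁺¹) = 0` for all
`n ≥ 1` and `i = 1, 2` (the `G`-module `Iⁿ/Iⁿ⁺¹` being given as an abstract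
`G`-module `M n` identified equivariantly with the image of `Iⁿ` in
`A/Iⁿ⁺¹`).  Then for every `n ≥ 1` the natural map of invariant unit groups
`((A/Iⁿ⁺¹)ˣ)ᴳ → ((A/Iⁿ)ˣ)ᴳ` is surjective, and the induced map
`H¹(G, (A/Iⁿ⁺¹)ˣ) → H¹(G, (A/Iⁿ)ˣ)` is an isomorphism (stated via explicit
`1`-cocycles and `1`-coboundaries; the `G`-actions on the quotients are
expressed through representatives). -/
theorem stmt11 (G A : Type) [Group G] [Finite G] [CommRing A]
    [MulSemiringAction G A] (I : Ideal A)
    (hstable : ∀ (g : G) (x : A), x ∈ I → g • x ∈ I)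
    (M : ℕ → Type) [∀ n, AddCommGroup (M n)] [∀ n, DistribMulAction G (M n)]
    (j : ∀ n, M n →+ A ⧸ I ^ (n + 1))
    (hj_inj : ∀ n, Function.Injective (j n))
    (hj_range : ∀ (n : ℕ) (x : A ⧸ I ^ (n + 1)),
      (∃ m, j n m = x) ↔ x ∈ (I ^ n).map (Ideal.Quotient.mk (I ^ (n + 1))))
    (hj_equiv : ∀ (n : ℕ) (g : G) (m : M n) (a : A),
      j n m = Ideal.Quotient.mk (I ^ (n + 1)) a →
        j n (g • m) = Ideal.Quotient.mk (I ^ (n + 1)) (g • a))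
    (h1 : ∀ n : ℕ, 1 ≤ n →
      Subsingleton (groupCohomology (Rep.ofDistribMulAction ℤ G (M n)) 1))
    (h2 : ∀ n : ℕ, 1 ≤ n →
      Subsingleton (groupCohomology (Rep.ofDistribMulAction ℤ G (M n)) 2)) :
    ∀ n : ℕ, 1 ≤ n →
      -- surjectivity of `((A/Iⁿ⁺¹)ˣ)ᴳ → ((A/Iⁿ)ˣ)ᴳ`
      ((∀ u : (A ⧸ I ^ n)ˣ,
        (∀ (g : G) (a : A), Ideal.Quotient.mk (I ^ n) a = (u : A ⧸ I ^ n) →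
          Ideal.Quotient.mk (I ^ n) (g • a) = (u : A ⧸ I ^ n)) →
        ∃ v : (A ⧸ I ^ (n + 1))ˣ,
          (∀ (g : G) (a : A),
            Ideal.Quotient.mk (I ^ (n + 1)) a = (v : A ⧸ I ^ (n + 1)) →
            Ideal.Quotient.mk (I ^ (n + 1)) (g • a) = (v : A ⧸ I ^ (n + 1))) ∧
          Ideal.Quotient.factor (Ideal.pow_le_pow_right n.le_succ)
            (v : A ⧸ I ^ (n + 1)) = (u : A ⧸ I ^ n)) ∧
      -- injectivity of `H¹(G, (A/Iⁿ⁺¹)ˣ) → H¹(G, (A/Iⁿ)ˣ)`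
      (∀ c : G → (A ⧸ I ^ (n + 1))ˣ,
        (∀ (g h : G) (x : A),
          Ideal.Quotient.mk (I ^ (n + 1)) x = (c h : A ⧸ I ^ (n + 1)) →
          (c (g * h) : A ⧸ I ^ (n + 1)) =
            Ideal.Quotient.mk (I ^ (n + 1)) (g • x) * (c g : A ⧸ I ^ (n + 1))) →
        (∃ b : (A ⧸ I ^ n)ˣ, ∀ (g : G) (a : A),
          Ideal.Quotient.mk (I ^ n) a = (b : A ⧸ I ^ n) →
          Ideal.Quotient.factor (Ideal.pow_le_pow_right n.le_succ)
              (c g : A ⧸ I ^ (n + 1)) =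
            Ideal.Quotient.mk (I ^ n) (g • a) * ((b⁻¹ : (A ⧸ I ^ n)ˣ) : A ⧸ I ^ n)) →
        ∃ a : (A ⧸ I ^ (n + 1))ˣ, ∀ (g : G) (x : A),
          Ideal.Quotient.mk (I ^ (n + 1)) x = (a : A ⧸ I ^ (n + 1)) →
          (c g : A ⧸ I ^ (n + 1)) =
            Ideal.Quotient.mk (I ^ (n + 1)) (g • x) *
              ((a⁻¹ : (A ⧸ I ^ (n + 1))ˣ) : A ⧸ I ^ (n + 1))) ∧
      -- surjectivity of `H¹(G, (A/Iⁿ⁺¹)ˣ) → H¹(G, (A/Iⁿ)ˣ)`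
      (∀ c : G → (A ⧸ I ^ n)ˣ,
        (∀ (g h : G) (x : A),
          Ideal.Quotient.mk (I ^ n) x = (c h : A ⧸ I ^ n) →
          (c (g * h) : A ⧸ I ^ n) =
            Ideal.Quotient.mk (I ^ n) (g • x) * (c g : A ⧸ I ^ n)) →
        ∃ c' : G → (A ⧸ I ^ (n + 1))ˣ,
          (∀ (g h : G) (x : A),
            Ideal.Quotient.mk (I ^ (n + 1)) x = (c' h : A ⧸ I ^ (n + 1)) →
            (c' (g * h) : A ⧸ I ^ (n + 1)) =
              Ideal.Quotient.mk (I ^ (n + 1)) (g • x) *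
                (c' g : A ⧸ I ^ (n + 1))) ∧
          ∃ b : (A ⧸ I ^ n)ˣ, ∀ (g : G) (a : A),
            Ideal.Quotient.mk (I ^ n) a = (b : A ⧸ I ^ n) →
            Ideal.Quotient.factor (Ideal.pow_le_pow_right n.le_succ)
                (c' g : A ⧸ I ^ (n + 1)) =
              (c g : A ⧸ I ^ n) *
                (Ideal.Quotient.mk (I ^ n) (g • a) *
                  ((b⁻¹ : (A ⧸ I ^ n)ˣ) : A ⧸ I ^ n)))) :=
  stmt11_general G A I hstable M j hj_inj hj_range hj_equiv h1 h2
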